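/- Let S^0, S^1 ⊂ ℝ^d be finite sets with Fly Bloom Filters w_0 and w_1 respectively, fix a point x ∈ ℝ^d with FlyHash h(x), pick any δ ∈ (0,1), and let μ = min{ E_M[(w_0ᵀh(x))/ρ], E_M[(w_1ᵀh(x))/ρ] }. If ρ·μ ≥ 12·ln(4/δ), then with probability at least 1 − δ over the random choice of the projection matrix M, both of the following hold: (1/2)·E_M[(w_1ᵀh(x))/ρ] ≤ (w_1ᵀh(x))/ρ ≤ (3/2)·E_M[(w_1ᵀh(x))/ρ], and (1/2)·E_M[(w_0ᵀh(x))/ρ] ≤ (w_0ᵀh(x))/ρ ≤ (3/2)·E_M[(w_0ᵀh(x))/ρ]. -/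

import Mathlib

open MeasureTheory ProbabilityTheory

noncomputable section

open scoped Classical

/-- Dot product of a binary vector `θ` with a real vector `x`. -/
def bdot {d : ℕ} (θ : Fin d → Bool) (x : Fin d → ℝ) : ℝ :=
  ∑ i, if θ i = true then x i else 0

/-- The set of binary vectors in `{0,1}^d` with exactly `s` ones. -/
def sparseSet (d s : ℕ) : Finset (Fin d → Bool) :=
  Finset.univ.filter fun θ => (Finset.univ.filter fun i => θ i = true).card = s

lemma sparseSet_nonempty {d s : ℕ} (h : s ≤ d) : (sparseSet d s).Nonempty := by
  obtain ⟨t, -, ht⟩ := Finset.exists_subset_card_eq (s := (Finset.univ : Finset (Fin d)))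
    (n := s) (by simpa using h)
  refine ⟨fun i => decide (i ∈ t), ?_⟩
  simp only [sparseSet, Finset.mem_filter, Finset.mem_univ, true_and]
  rw [← ht]
  congr 1
  ext i
  simp

/-- `Q`: the uniform distribution over `s`-sparse binary vectors in `{0,1}^d`. -/
def Q (d s : ℕ) (h : s ≤ d) : Measure (Fin d → Bool) :=
  (PMF.uniformOfFinset (sparseSet d s) (sparseSet_nonempty h)).toMeasure

/-- Distribution of the random projection matrix `M`: `m` i.i.d. rows drawn from `Q`. -/
def MQ (d s m : ℕ) (h : s ≤ d) : Measure (Fin m → Fin d → Bool) :=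
  Measure.pi fun _ => Q d s h

/-- The FBF score `wᵀh(x)`, where `w` is the Fly Bloom Filter of the finite set `S'`
(built from the matrix `M` with thresholds `τ`) and `h(x)` is the FlyHash of `x`. -/
def score {d m : ℕ} (τ : (Fin d → ℝ) → ℝ) (M : Fin m → Fin d → Bool)
    (S' : Finset (Fin d → ℝ)) (x : Fin d → ℝ) : ℝ :=
  (Finset.univ.filter fun j : Fin m =>
    (∀ x' ∈ S', bdot (M j) x' < τ x') ∧ τ x ≤ bdot (M j) x).card

/-- `q(x, x') = Pr_{θ∼Q}(θᵀx' ≥ τ_{x'} | θᵀx ≥ τ_x)`. -/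
def qprob {d : ℕ} (s : ℕ) (h : s ≤ d) (τ : (Fin d → ℝ) → ℝ) (x x' : Fin d → ℝ) : ℝ :=
  ((Q d s h)[|{θ | τ x ≤ bdot θ x}] {θ | τ x' ≤ bdot θ x'}).toReal

/-!
Row `j` of `M` contributes to the score `wᵀh(x)` exactly when `M j` lies in the set of
`θ` that fire for `x` but for no point of `S'`. Since the rows are i.i.d., the score is a
binomial count with mean `m p`, whose moment generating function `(1 + p(eᵗ - 1))ᵐ` is at most
`exp (m p (eᵗ - 1))`. The multiplicative Chernoff bound at `t = ± 1/2` bounds each tail by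
`exp (-m p / 12) ≤ δ / 4`, and a union bound over the four tails of the two scores finishes.
-/

open Real

section Chernoff

variable {Ω : Type*} [MeasurableSpace Ω] {μ : Measure Ω} [IsFiniteMeasure μ] {X : Ω → ℝ}
  {mean : ℝ}

-- At `t = 1/2` the exponent is `mean (√e - 7/4)`, and `√e ≤ 5/3` since `e ≤ 25/9`.
lemma measureReal_ge_three_halves_mul_le_exp (hmean : 0 ≤ mean)
    (hint : ∀ t, Integrable (fun ω => exp (t * X ω)) μ)
    (hmgf : ∀ t, mgf X μ t ≤ exp (mean * (exp t - 1))) :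
    μ.real {ω | 3 / 2 * mean ≤ X ω} ≤ exp (-mean / 12) := by
  have hsq : exp (1 / 2) * exp (1 / 2) = exp 1 := by rw [← exp_add]; norm_num
  have hexp_half : exp (1 / 2) ≤ 5 / 3 := by
    nlinarith [exp_one_lt_d9, exp_pos (1 / 2)]
  calc μ.real {ω | 3 / 2 * mean ≤ X ω}
      ≤ exp (-(1 / 2) * (3 / 2 * mean)) * mgf X μ (1 / 2) :=
        measure_ge_le_exp_mul_mgf _ (by norm_num) (hint _)
    _ ≤ exp (-(1 / 2) * (3 / 2 * mean)) * exp (mean * (exp (1 / 2) - 1)) := by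
        gcongr; exact hmgf _
    _ ≤ exp (-mean / 12) := by
        rw [← exp_add, exp_le_exp]
        nlinarith

-- At `t = -1/2` the exponent is `mean (1/√e - 3/4)`, and `1/√e ≤ 2/3` since `3/2 ≤ √e`.
lemma measureReal_le_half_mul_le_exp (hmean : 0 ≤ mean)
    (hint : ∀ t, Integrable (fun ω => exp (t * X ω)) μ)
    (hmgf : ∀ t, mgf X μ t ≤ exp (mean * (exp t - 1))) :
    μ.real {ω | X ω ≤ 1 / 2 * mean} ≤ exp (-mean / 12) := by
  have hexp_neg_half : exp (-(1 / 2)) ≤ 2 / 3 := by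
    rw [exp_neg, inv_le_comm₀ (exp_pos _) (by norm_num)]
    linarith [add_one_le_exp (1 / 2)]
  calc μ.real {ω | X ω ≤ 1 / 2 * mean}
      ≤ exp (-(-(1 / 2)) * (1 / 2 * mean)) * mgf X μ (-(1 / 2)) :=
        measure_le_le_exp_mul_mgf _ (by norm_num) (hint _)
    _ ≤ exp (-(-(1 / 2)) * (1 / 2 * mean)) * exp (mean * (exp (-(1 / 2)) - 1)) := by
        gcongr; exact hmgf _
    _ ≤ exp (-mean / 12) := by
        rw [← exp_add, exp_le_exp]
        nlinarith

lemma measureReal_notMem_Icc_le_two_mul_exp (hmean : 0 ≤ mean)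
    (hint : ∀ t, Integrable (fun ω => exp (t * X ω)) μ)
    (hmgf : ∀ t, mgf X μ t ≤ exp (mean * (exp t - 1))) :
    μ.real {ω | X ω ∈ Set.Icc (1 / 2 * mean) (3 / 2 * mean)}ᶜ ≤ 2 * exp (-mean / 12) := by
  have hsub : {ω | X ω ∈ Set.Icc (1 / 2 * mean) (3 / 2 * mean)}ᶜ
      ⊆ {ω | X ω ≤ 1 / 2 * mean} ∪ {ω | 3 / 2 * mean ≤ X ω} := by
    intro ω hω
    simp only [Set.mem_compl_iff, Set.mem_ofPred_eq, Set.mem_Icc, not_and_or, not_le] at hω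
    rcases hω with hlow | hhigh
    exacts [Or.inl hlow.le, Or.inr hhigh.le]
  calc _ ≤ μ.real ({ω | X ω ≤ 1 / 2 * mean} ∪ {ω | 3 / 2 * mean ≤ X ω}) :=
        measureReal_mono hsub
    _ ≤ μ.real {ω | X ω ≤ 1 / 2 * mean} + μ.real {ω | 3 / 2 * mean ≤ X ω} :=
        measureReal_union_le _ _
    _ ≤ 2 * exp (-mean / 12) := by
        linarith [measureReal_le_half_mul_le_exp hmean hint hmgf,
          measureReal_ge_three_halves_mul_le_exp hmean hint hmgf]

end Chernoff

section SampleCount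

variable {α ι : Type*} [Fintype ι] {A : Set α}

def countIn (A : Set α) (ω : ι → α) : ℝ :=
  ∑ i, A.indicator 1 (ω i)

lemma exp_mul_countIn (t : ℝ) (ω : ι → α) :
    exp (t * countIn A ω) = ∏ i, (1 + A.indicator (fun _ => exp t - 1) (ω i)) := by
  rw [countIn, Finset.mul_sum, exp_sum]
  refine Finset.prod_congr rfl fun i _ => ?_
  by_cases h : ω i ∈ A <;> simp [h]

variable [MeasurableSpace α] {P : Measure α} [IsProbabilityMeasure P]

lemma integral_countIn (hA : MeasurableSet A) :
    ∫ ω, countIn A ω ∂(Measure.pi fun _ : ι => P) = Fintype.card ι * P.real A := by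
  have hind : Integrable (A.indicator (1 : α → ℝ)) P := (integrable_const 1).indicator hA
  unfold countIn
  rw [integral_finsetSum _ fun i _ => integrable_comp_eval hind]
  have hcoord (i : ι) : ∫ ω, A.indicator 1 (ω i) ∂(Measure.pi fun _ : ι => P) = P.real A := by
    rw [integral_comp_eval (μ := fun _ : ι => P) hind.aestronglyMeasurable,
      integral_indicator_one hA]
  simp [hcoord]

lemma integrable_exp_mul_countIn (hA : MeasurableSet A) (t : ℝ) :
    Integrable (fun ω => exp (t * countIn A ω)) (Measure.pi fun _ : ι => P) := by
  simp_rw [exp_mul_countIn]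
  exact Integrable.fintype_prod fun _ =>
    (integrable_const (1 : ℝ)).add ((integrable_const (exp t - 1)).indicator hA)

lemma mgf_countIn (hA : MeasurableSet A) (t : ℝ) :
    mgf (countIn A) (Measure.pi fun _ : ι => P) t
      = (1 + P.real A * (exp t - 1)) ^ Fintype.card ι := by
  simp_rw [mgf, exp_mul_countIn]
  rw [integral_fintype_prod_eq_pow (fun θ => 1 + A.indicator (fun _ => exp t - 1) θ),
    integral_add (integrable_const 1) ((integrable_const _).indicator hA),
    integral_indicator_const _ hA]
  simp [mul_comm]

lemma mgf_countIn_le (hA : MeasurableSet A) (t : ℝ) :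
    mgf (countIn A) (Measure.pi fun _ : ι => P) t
      ≤ exp (Fintype.card ι * P.real A * (exp t - 1)) := by
  have hbase : 0 ≤ 1 + P.real A * (exp t - 1) := by
    nlinarith [measureReal_nonneg (μ := P) (s := A), measureReal_le_one (μ := P) (s := A),
      exp_pos t]
  rw [mgf_countIn hA, mul_assoc, exp_nat_mul]
  exact pow_le_pow_left₀ hbase (by linarith [add_one_le_exp (P.real A * (exp t - 1))]) _

lemma measureReal_countIn_notMem_Icc_le (hA : MeasurableSet A) :
    (Measure.pi fun _ : ι => P).real
        {ω | countIn A ω ∈ Set.Icc (1 / 2 * (Fintype.card ι * P.real A))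
          (3 / 2 * (Fintype.card ι * P.real A))}ᶜ
      ≤ 2 * exp (-(Fintype.card ι * P.real A) / 12) :=
  measureReal_notMem_Icc_le_two_mul_exp (by positivity) (integrable_exp_mul_countIn hA)
    (mgf_countIn_le hA)

end SampleCount

lemma one_sub_add_le_measureReal_of_inter_subset {Ω : Type*} [MeasurableSpace Ω]
    {μ : Measure Ω} [IsProbabilityMeasure μ] {s t u : Set Ω} {a b : ℝ} (hs : μ.real sᶜ ≤ a)
    (ht : μ.real tᶜ ≤ b) (hu : s ∩ t ⊆ u) : 1 - (a + b) ≤ μ.real u := by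
  have hcover : μ.real Set.univ ≤ μ.real u + (μ.real sᶜ + μ.real tᶜ) := by
    calc μ.real Set.univ ≤ μ.real (u ∪ (sᶜ ∪ tᶜ)) := by
          refine measureReal_mono fun ω _ => ?_
          by_cases hω : ω ∈ s ∩ t
          exacts [Or.inl (hu hω), Or.inr (by rwa [← Set.compl_inter])]
      _ ≤ μ.real u + (μ.real sᶜ + μ.real tᶜ) :=
          (measureReal_union_le _ _).trans (by gcongr; exact measureReal_union_le _ _)
  rw [probReal_univ] at hcover
  linarith

instance isProbabilityMeasure_Q (d s : ℕ) (h : s ≤ d) : IsProbabilityMeasure (Q d s h) :=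
  PMF.toMeasure.isProbabilityMeasure _

instance isProbabilityMeasure_MQ (d s m : ℕ) (h : s ≤ d) :
    IsProbabilityMeasure (MQ d s m h) := by
  rw [MQ]; infer_instance

def scoringRowSet {d : ℕ} (τ : (Fin d → ℝ) → ℝ) (S' : Finset (Fin d → ℝ)) (x : Fin d → ℝ) :
    Set (Fin d → Bool) :=
  {θ | (∀ x' ∈ S', bdot θ x' < τ x') ∧ τ x ≤ bdot θ x}

lemma score_eq_countIn {d m : ℕ} (τ : (Fin d → ℝ) → ℝ) (M : Fin m → Fin d → Bool)
    (S' : Finset (Fin d → ℝ)) (x : Fin d → ℝ) :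
    score τ M S' x = countIn (scoringRowSet τ S' x) M := by
  simp [score, countIn, scoringRowSet, Set.indicator_apply, Finset.sum_boole]

lemma integral_score {d s m : ℕ} (hsd : s ≤ d) (τ : (Fin d → ℝ) → ℝ) (S' : Finset (Fin d → ℝ))
    (x : Fin d → ℝ) :
    ∫ M, score τ M S' x ∂(MQ d s m hsd) = m * (Q d s hsd).real (scoringRowSet τ S' x) := by
  simp_rw [score_eq_countIn]
  rw [MQ, integral_countIn (Set.toFinite _).measurableSet, Fintype.card_fin]

lemma measureReal_score_div_notMem_Icc_le {d s m ρ : ℕ} (hsd : s ≤ d) (hρ : 0 < ρ)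
    (τ : (Fin d → ℝ) → ℝ) (S' : Finset (Fin d → ℝ)) (x : Fin d → ℝ) {δ : ℝ} (hδ : 0 < δ)
    (h : 12 * log (4 / δ) ≤ ρ * ∫ M, score τ M S' x / ρ ∂(MQ d s m hsd)) :
    (MQ d s m hsd).real {M | score τ M S' x / ρ ∈
      Set.Icc (1 / 2 * ∫ M', score τ M' S' x / ρ ∂(MQ d s m hsd))
        (3 / 2 * ∫ M', score τ M' S' x / ρ ∂(MQ d s m hsd))}ᶜ ≤ δ / 2 := by
  set mean := (m : ℝ) * (Q d s hsd).real (scoringRowSet τ S' x)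
  have hρ' : (0 : ℝ) < ρ := by exact_mod_cast hρ
  have hE : ∫ M, score τ M S' x / ρ ∂(MQ d s m hsd) = mean / ρ := by
    rw [integral_div, integral_score]
  have htail : exp (-mean / 12) ≤ δ / 4 := by
    rw [hE, mul_div_cancel₀ _ hρ'.ne'] at h
    calc exp (-mean / 12) ≤ exp (-log (4 / δ)) := exp_le_exp.mpr (by linarith)
      _ = δ / 4 := by rw [exp_neg, exp_log (by positivity), inv_div]
  have hset : {M : Fin m → Fin d → Bool | score τ M S' x / ρ ∈
      Set.Icc (1 / 2 * ∫ M', score τ M' S' x / ρ ∂(MQ d s m hsd))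
        (3 / 2 * ∫ M', score τ M' S' x / ρ ∂(MQ d s m hsd))}
      = {M | countIn (scoringRowSet τ S' x) M ∈ Set.Icc (1 / 2 * mean) (3 / 2 * mean)} := by
    rw [hE]
    ext M
    simp only [Set.mem_ofPred_eq, Set.mem_Icc, score_eq_countIn, ← mul_div_assoc,
      div_le_div_iff_of_pos_right hρ']
  have hdev := measureReal_countIn_notMem_Icc_le (P := Q d s hsd) (ι := Fin m)
    (Set.toFinite (scoringRowSet τ S' x)).measurableSet
  rw [Fintype.card_fin] at hdev
  rw [hset, MQ]
  linarith

theorem fbf_score_concentration_general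
    (d s m ρ : ℕ) (hsd : s ≤ d) (hρ : 0 < ρ)
    (τ : (Fin d → ℝ) → ℝ)
    (S0 S1 : Finset (Fin d → ℝ)) (x : Fin d → ℝ)
    (δ : ℝ) (hδ : δ ∈ Set.Ioo (0 : ℝ) 1)
    (hμ : 12 * Real.log (4 / δ) ≤ (ρ : ℝ) *
      min (∫ M, score τ M S0 x / ρ ∂(MQ d s m hsd))
          (∫ M, score τ M S1 x / ρ ∂(MQ d s m hsd))) :
    1 - δ ≤ ((MQ d s m hsd) {M |
      ((1 : ℝ) / 2) * (∫ M', score τ M' S1 x / ρ ∂(MQ d s m hsd)) ≤ score τ M S1 x / ρ ∧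
      score τ M S1 x / ρ ≤ ((3 : ℝ) / 2) * (∫ M', score τ M' S1 x / ρ ∂(MQ d s m hsd)) ∧
      ((1 : ℝ) / 2) * (∫ M', score τ M' S0 x / ρ ∂(MQ d s m hsd)) ≤ score τ M S0 x / ρ ∧
      score τ M S0 x / ρ ≤ ((3 : ℝ) / 2) * (∫ M', score τ M' S0 x / ρ ∂(MQ d s m hsd))}).toReal := by
  have hdev0 := measureReal_score_div_notMem_Icc_le hsd hρ τ S0 x hδ.1
    (hμ.trans (by gcongr; exact min_le_left _ _))
  have hdev1 := measureReal_score_div_notMem_Icc_le hsd hρ τ S1 x hδ.1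
    (hμ.trans (by gcongr; exact min_le_right _ _))
  rw [← measureReal_def]
  exact (le_of_eq (by ring)).trans (one_sub_add_le_measureReal_of_inter_subset hdev1 hdev0
    fun M hM => ⟨hM.1.1, hM.1.2, hM.2.1, hM.2.2⟩)

/-- concentration, Lemma S3 form.
If `ρ · μ ≥ 12 · ln(4/δ)` where `μ = min{E_M[(w_0ᵀh(x))/ρ], E_M[(w_1ᵀh(x))/ρ]}`, then with
probability at least `1 − δ` over `M`, both normalized scores are within a factor
`[1/2, 3/2]` of their expectations. -/
theorem fbf_score_concentration
    (d s m ρ : ℕ) (hs : 0 < s) (hsd : s ≤ d) (hρ : 0 < ρ) (hρm : ρ ≤ m)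
    (τ : (Fin d → ℝ) → ℝ)
    (hτ : ∀ x : Fin d → ℝ, ((Q d s hsd) {θ | τ x ≤ bdot θ x}).toReal = (ρ : ℝ) / m)
    (S0 S1 : Finset (Fin d → ℝ)) (x : Fin d → ℝ)
    (δ : ℝ) (hδ : δ ∈ Set.Ioo (0 : ℝ) 1)
    (hμ : 12 * Real.log (4 / δ) ≤ (ρ : ℝ) *
      min (∫ M, score τ M S0 x / ρ ∂(MQ d s m hsd))
          (∫ M, score τ M S1 x / ρ ∂(MQ d s m hsd))) :
    1 - δ ≤ ((MQ d s m hsd) {M |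
      ((1 : ℝ) / 2) * (∫ M', score τ M' S1 x / ρ ∂(MQ d s m hsd)) ≤ score τ M S1 x / ρ ∧
      score τ M S1 x / ρ ≤ ((3 : ℝ) / 2) * (∫ M', score τ M' S1 x / ρ ∂(MQ d s m hsd)) ∧
      ((1 : ℝ) / 2) * (∫ M', score τ M' S0 x / ρ ∂(MQ d s m hsd)) ≤ score τ M S0 x / ρ ∧
      score τ M S0 x / ρ ≤ ((3 : ℝ) / 2) * (∫ M', score τ M' S0 x / ρ ∂(MQ d s m hsd))}).toReal :=
  fbf_score_concentration_general d s m ρ hsd hρ τ S0 S1 x δ hδ hμ
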